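/- arXiv:0912.1783 — 4 statements merged into one kernel-verified Lean document; each statement's English description precedes it below -/
import Mathlib

section
/- Let H be a candidate sequence on a compact metrizable space E. Then for any two ordinals α and β and every x ∈ E, one has u_{α+β}^H(x) ≤ u_α^H(x) + u_β^H(x). -/
open Filter Topology Set
open scoped ENNReal

/-- A candidate sequence on a topological space `M`: a nondecreasing sequence of
nonnegative functions, starting at `0`, with bounded pointwise limit. -/
structure CandidateSeq (M : Type*) [TopologicalSpace M] where
  h : ℕ → M → ℝ
  nonneg : ∀ k x, 0 ≤ h k x
  mono : ∀ x, Monotone fun k => h k x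
  zero : ∀ x, h 0 x = 0
  limFn : M → ℝ
  tendsto_limFn : ∀ x, Tendsto (fun k => h k x) atTop (𝓝 (limFn x))
  bddAbove : ∃ B : ℝ, ∀ x, limFn x ≤ B

namespace CandidateSeq

variable {M : Type*} [TopologicalSpace M]

/-- The upper semicontinuous envelope of a `[0,∞]`-valued function:
`f~(x) = limsup_{y → x} f(y)`, the limsup including the value at `x` itself. -/
noncomputable def uscEnv (f : M → ℝ≥0∞) : M → ℝ≥0∞ := fun x => Filter.limsup f (𝓝 x)

/-- The tail functions `τ_k = h - h_k` (nonnegative, viewed in `[0,∞]`). -/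
noncomputable def tau (H : CandidateSeq M) (k : ℕ) : M → ℝ≥0∞ :=
  fun x => ENNReal.ofReal (H.limFn x - H.h k x)

/-- The transfinite sequence `u_α^H` associated to a candidate sequence, defined by
transfinite recursion: `u_0 ≡ 0`; `u_{α+1} = lim_k (u_α + τ_k)~` (the envelopes are
nonincreasing in `k`, so the limit is the infimum); at limit ordinals,
`u_α = (sup_{β<α} u_β)~`. Values are taken in `[0,∞]`. -/
noncomputable def u (H : CandidateSeq M) (α : Ordinal) : M → ℝ≥0∞ :=
  Ordinal.limitRecOn α
    (fun _ => 0)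
    (fun _ v => fun x => ⨅ k : ℕ, uscEnv (fun y => v y + H.tau k y) x)
    (fun o _ ih => uscEnv (fun y => ⨆ p : {β : Ordinal // β < o}, ih p.1 p.2 y))

/-- The order of accumulation of a candidate sequence: the least ordinal `α`
with `u_α = u_{α+1}`. -/
noncomputable def orderOfAccum (H : CandidateSeq M) : Ordinal :=
  sInf {α : Ordinal | H.u α = H.u (α + 1)}

/-- The restriction `H|_S` of a candidate sequence to a subset, as a candidate
sequence on the subspace `S`. -/
def restrict (H : CandidateSeq M) (S : Set M) : CandidateSeq S where
  h k x := H.h k x.1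
  nonneg k x := H.nonneg k x.1
  mono x := H.mono x.1
  zero x := H.zero x.1
  limFn x := H.limFn x.1
  tendsto_limFn x := H.tendsto_limFn x.1
  bddAbove := H.bddAbove.imp fun B hB x => hB x.1

/-- The pullback `F ∘ π` of a candidate sequence along a map. -/
def comp {K : Type*} [TopologicalSpace K] (F : CandidateSeq K) (π : M → K) :
    CandidateSeq M where
  h k x := F.h k (π x)
  nonneg k x := F.nonneg k (π x)
  mono x := F.mono (π x)
  zero x := F.zero (π x)
  limFn x := F.limFn (π x)
  tendsto_limFn x := F.tendsto_limFn (π x)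
  bddAbove := F.bddAbove.imp fun B hB x => hB (π x)

/-- `H` uniformly dominates `F`. -/
def UnifDominates (H F : CandidateSeq M) : Prop :=
  ∀ ε : ℝ, 0 < ε → ∀ k, ∃ l, ∀ x, F.h k x ≤ H.h l x + ε

/-- Uniform equivalence of candidate sequences. -/
def UnifEquiv (H F : CandidateSeq M) : Prop :=
  UnifDominates H F ∧ UnifDominates F H

end CandidateSeq

/-!
Induction on `β`. The idea is that every `u_α` is upper semicontinuous, and a u.s.c. summand
passes through the envelope: `(g + f)~ ≤ g + f~`. At a successor this is applied inside each
`(u_{α+δ} + τ_k)~`; at a limit `α + δ`, every `γ < α + δ` is either `≤ α` or of the form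
`α + γ'` with `γ' < δ`, so `sup_{γ < α+δ} u_γ ≤ u_α + u_δ` by monotonicity in the index.
-/

-- `ENNReal.limsup_add_le` needs a `CountableInterFilter`, which `𝓝 x` is not.
theorem ENNReal.limsup_add_le' {ι : Type*} (F : Filter ι) (f g : ι → ℝ≥0∞) :
    limsup (f + g) F ≤ limsup f F + limsup g F := by
  refine ENNReal.le_of_forall_pos_le_add fun ε hε hlt => ?_
  have hε2 : (ε : ℝ≥0∞) / 2 ≠ 0 := by simp [hε.ne']
  have hf := ENNReal.lt_add_right (le_self_add.trans_lt hlt).ne hε2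
  have hg := ENNReal.lt_add_right (le_add_self.trans_lt hlt).ne hε2
  refine limsup_le_of_le (by isBoundedDefault) ?_
  filter_upwards [eventually_lt_of_limsup_lt hf, eventually_lt_of_limsup_lt hg] with y hfy hgy
  calc f y + g y ≤ (limsup f F + ε / 2) + (limsup g F + ε / 2) := add_le_add hfy.le hgy.le
    _ = limsup f F + limsup g F + ε := by rw [add_add_add_comm, ENNReal.add_halves]

namespace CandidateSeq

section Envelope

variable {M : Type*} [TopologicalSpace M]

theorem le_uscEnv (f : M → ℝ≥0∞) (x : M) : f x ≤ uscEnv f x :=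
  le_limsup_of_frequently_le'
    ((frequently_pure (p := fun y => f x ≤ f y)).2 le_rfl |>.filter_mono (pure_le_nhds x))

theorem uscEnv_mono {f g : M → ℝ≥0∞} (h : f ≤ g) : uscEnv f ≤ uscEnv g :=
  fun _ => limsup_le_limsup (.of_forall h)

theorem uscEnv_add_le (f g : M → ℝ≥0∞) : uscEnv (f + g) ≤ uscEnv f + uscEnv g :=
  fun _ => ENNReal.limsup_add_le' _ f g

theorem upperSemicontinuous_uscEnv (f : M → ℝ≥0∞) : UpperSemicontinuous (uscEnv f) := by
  intro x a ha
  obtain ⟨b, hb, hba⟩ := exists_between ha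
  filter_upwards [eventually_eventually_nhds.2 (eventually_lt_of_limsup_lt hb)] with z hz
  exact (limsup_le_of_le (by isBoundedDefault) (hz.mono fun _ => le_of_lt)).trans_lt hba

theorem _root_.UpperSemicontinuous.uscEnv_eq {f : M → ℝ≥0∞} (hf : UpperSemicontinuous f) :
    uscEnv f = f :=
  funext fun x => le_antisymm (hf.limsup_le x) (le_uscEnv f x)

theorem _root_.UpperSemicontinuous.uscEnv_add_le {g : M → ℝ≥0∞} (hg : UpperSemicontinuous g)
    (f : M → ℝ≥0∞) : uscEnv (g + f) ≤ g + uscEnv f := by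
  simpa only [hg.uscEnv_eq] using CandidateSeq.uscEnv_add_le g f

end Envelope

variable {M : Type*} [TopologicalSpace M] (H : CandidateSeq M)

theorem u_zero : H.u 0 = 0 := by
  rw [u, Ordinal.limitRecOn_zero]
  rfl

theorem u_succ (α : Ordinal) :
    H.u (α + 1) = fun x => ⨅ k : ℕ, uscEnv (H.u α + H.tau k) x := by
  rw [u, Ordinal.limitRecOn_add_one]
  rfl

theorem u_limit {α : Ordinal} (hα : Order.IsSuccLimit α) :
    H.u α = uscEnv (⨆ γ : {γ : Ordinal // γ < α}, H.u γ) := by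
  rw [u, Ordinal.limitRecOn_limit _ _ _ _ hα]
  congr 1
  ext x
  rw [iSup_apply]
  rfl

theorem upperSemicontinuous_u (α : Ordinal) : UpperSemicontinuous (H.u α) := by
  induction α using Ordinal.limitRecOn with
  | zero =>
    rw [u_zero]
    exact upperSemicontinuous_const
  | add_one β _ =>
    rw [u_succ]
    exact upperSemicontinuous_iInf fun k => upperSemicontinuous_uscEnv _
  | limit β hβ _ =>
    rw [u_limit H hβ]
    exact upperSemicontinuous_uscEnv _

theorem u_le_u_succ (α : Ordinal) : H.u α ≤ H.u (α + 1) := by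
  intro x
  rw [u_succ]
  exact le_iInf fun k => le_self_add.trans (le_uscEnv _ x)

theorem u_mono : Monotone H.u := by
  intro α β hαβ
  induction β using Ordinal.limitRecOn with
  | zero => rw [nonpos_iff_eq_zero.mp hαβ]
  | add_one γ ih =>
    rcases hαβ.eq_or_lt with rfl | hlt
    · exact le_rfl
    · exact (ih (Order.lt_add_one_iff.mp hlt)).trans (H.u_le_u_succ γ)
  | limit γ hγ _ =>
    rcases hαβ.eq_or_lt with rfl | hlt
    · exact le_rfl
    · rw [u_limit H hγ]
      exact (le_iSup (fun γ : {γ : Ordinal // γ < _} => H.u γ) ⟨α, hlt⟩).trans (le_uscEnv _)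

theorem u_add_succ_le {α δ : Ordinal} (ih : H.u (α + δ) ≤ H.u α + H.u δ) :
    H.u (α + (δ + 1)) ≤ H.u α + H.u (δ + 1) := by
  intro x
  rw [← add_assoc, u_succ, u_succ]
  simp only [Pi.add_apply, ENNReal.add_iInf]
  refine iInf_mono fun k => ?_
  calc uscEnv (H.u (α + δ) + H.tau k) x
      ≤ uscEnv (H.u α + (H.u δ + H.tau k)) x := by
        rw [← add_assoc]
        exact uscEnv_mono (add_le_add_left ih _) x
    _ ≤ H.u α x + uscEnv (H.u δ + H.tau k) x :=
        (H.upperSemicontinuous_u α).uscEnv_add_le _ x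

theorem u_add_limit_le {α δ : Ordinal} (hδ : Order.IsSuccLimit δ)
    (ih : ∀ γ < δ, H.u (α + γ) ≤ H.u α + H.u γ) :
    H.u (α + δ) ≤ H.u α + H.u δ := by
  have hsup : ⨆ γ : {γ : Ordinal // γ < α + δ}, H.u γ ≤ H.u α + H.u δ := by
    refine iSup_le fun ⟨γ, hγ⟩ => ?_
    rcases le_total γ α with hγα | hαγ
    · exact (H.u_mono hγα).trans le_self_add
    · obtain ⟨γ', rfl⟩ : ∃ γ', γ = α + γ' := ⟨γ - α, (Ordinal.add_sub_cancel_of_le hαγ).symm⟩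
      have hγ' : γ' < δ := (add_lt_add_iff_left α).mp hγ
      exact (ih γ' hγ').trans (add_le_add le_rfl (H.u_mono hγ'.le))
  calc H.u (α + δ) = uscEnv (⨆ γ : {γ : Ordinal // γ < α + δ}, H.u γ) :=
        H.u_limit (Ordinal.isSuccLimit_add α hδ)
    _ ≤ uscEnv (H.u α + H.u δ) := uscEnv_mono hsup
    _ = H.u α + H.u δ := ((H.upperSemicontinuous_u α).add (H.upperSemicontinuous_u δ)).uscEnv_eq

end CandidateSeq

theorem uSeq_add_le_general {E : Type*} [TopologicalSpace E]
    (H : CandidateSeq E) (α β : Ordinal) (x : E) :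
    H.u (α + β) x ≤ H.u α x + H.u β x := by
  induction β using Ordinal.limitRecOn generalizing x with
  | zero => simp only [add_zero, H.u_zero, Pi.zero_apply, le_refl]
  | add_one δ ih => exact H.u_add_succ_le ih x
  | limit δ hδ ih => exact H.u_add_limit_le hδ ih x

/-- **Subadditivity of the transfinite sequence** (Proposition `UsubAdd`): for a candidate
sequence `H` on a compact metrizable space `E` and any two ordinals `α, β`,
`u_{α+β}^H ≤ u_α^H + u_β^H` pointwise. -/
theorem uSeq_add_le {E : Type*} [TopologicalSpace E] [CompactSpace E]
    [TopologicalSpace.MetrizableSpace E] (H : CandidateSeq E) (α β : Ordinal) (x : E) :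
    H.u (α + β) x ≤ H.u α x + H.u β x :=
  uSeq_add_le_general H α β x
end

section
/- Let M and K be compact metrizable spaces, let π : M → K be a continuous surjection, let F be a candidate sequence on K, and let H = F ∘ π = (f_k ∘ π). Then for every ordinal γ and every x ∈ M, u_γ^H(x) ≤ u_γ^F(π(x)). -/
/-! Pulling back along a continuous map can only lower an upper semicontinuous envelope,
`(g ∘ π)~ ≤ g~ ∘ π`, and both the successor and the limit steps of the recursion are monotone
envelopes, so the inequality propagates by transfinite induction. -/

open Filter Topology Set
open scoped ENNReal

namespace CandidateSeq

variable {M K : Type*} [TopologicalSpace M] [TopologicalSpace K]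

theorem u_zero_s4 (H : CandidateSeq M) : H.u 0 = 0 :=
  Ordinal.limitRecOn_zero _ _ _

theorem u_add_one (H : CandidateSeq M) (α : Ordinal) :
    H.u (α + 1) = fun x => ⨅ k : ℕ, uscEnv (fun y => H.u α y + H.tau k y) x :=
  Ordinal.limitRecOn_add_one _ _ _ _

theorem u_of_isSuccLimit (H : CandidateSeq M) {α : Ordinal} (hα : Order.IsSuccLimit α) :
    H.u α = uscEnv (fun y => ⨆ p : {β : Ordinal // β < α}, H.u p.1 y) :=
  Ordinal.limitRecOn_limit _ _ _ _ hα

theorem uscEnv_le_of_le_comp {π : M → K} (hπ : Continuous π) {f : M → ℝ≥0∞} {g : K → ℝ≥0∞}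
    (hfg : ∀ y, f y ≤ g (π y)) (x : M) : uscEnv f x ≤ uscEnv g (π x) :=
  calc limsup f (𝓝 x) ≤ limsup (g ∘ π) (𝓝 x) := limsup_le_limsup (.of_forall hfg)
    _ = limsup g (map π (𝓝 x)) := limsup_comp g π _
    _ ≤ limsup g (𝓝 (π x)) := limsup_le_limsup_of_le hπ.continuousAt

end CandidateSeq

theorem uSeq_comp_le_general {M K : Type*} [TopologicalSpace M] [TopologicalSpace K] (π : M → K)
    (hπc : Continuous π) (F : CandidateSeq K) (γ : Ordinal) (x : M) :
    (F.comp π).u γ x ≤ F.u γ (π x) := by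
  induction γ using Ordinal.limitRecOn generalizing x with
  | zero => simp [CandidateSeq.u_zero_s4]
  | add_one α ih =>
    rw [CandidateSeq.u_add_one, CandidateSeq.u_add_one]
    exact iInf_mono fun k =>
      CandidateSeq.uscEnv_le_of_le_comp hπc (fun y => add_le_add_left (ih y) _) x
  | limit α hα ih =>
    rw [CandidateSeq.u_of_isSuccLimit _ hα, CandidateSeq.u_of_isSuccLimit _ hα]
    exact CandidateSeq.uscEnv_le_of_le_comp hπc
      (fun y => iSup_mono fun p : {β // β < α} => ih p.1 p.2 y) x

/-- **The transfinite sequence of a pullback is dominated**: if `π : M → K` is a continuous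
surjection, `F` a candidate sequence on `K`, and `H = F ∘ π`, then
`u_γ^H(x) ≤ u_γ^F(π x)` for every ordinal `γ` and every `x ∈ M`. -/
theorem uSeq_comp_le {M K : Type*} [TopologicalSpace M] [CompactSpace M]
    [TopologicalSpace.MetrizableSpace M] [TopologicalSpace K] [CompactSpace K]
    [TopologicalSpace.MetrizableSpace K] (π : M → K) (hπc : Continuous π)
    (hπs : Function.Surjective π) (F : CandidateSeq K) (γ : Ordinal) (x : M) :
    (F.comp π).u γ x ≤ F.u γ (π x) :=
  uSeq_comp_le_general π hπc F γ x
end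

section
/- Let d ∈ {1,2} and let 𝔻 be the closed unit ball in ℝ^d. Let Q = {q_k : k ∈ ℕ} be a countable set of pairwise distinct points contained in the interior of 𝔻. Then there exist a summable sequence (ε_k)_{k∈ℕ} of positive real numbers, a sequence of points (p_k)_{k∈ℕ} such that each closed ball B̄(p_k, ε_k) is contained in the interior of 𝔻, and a map π : 𝔻 → 𝔻 such that: (1) π is continuous and surjective; (2) π^{−1}({q_k}) = B̄(p_k, ε_k) for each k; and (3) the restriction of π to 𝔻 ∖ ∪_k B̄(p_k, ε_k) is a homeomorphism onto its image, which equals 𝔻 ∖ Q. -/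
/-!
The map `π` is the uniform limit of finite compositions of radial maps, the `n`-th of which
collapses a small ball `B̄(p_n, r_n / 2)` to its centre, stretches the surrounding annulus over
`B̄(p_n, r_n)` and fixes everything else; here `p_n` is where the partial inverses of the earlier
maps send `q_n`.
The radii are chosen one at a time, so small that the balls lie in the interior of `𝔻`, stay away
from the balls collapsed earlier, and have images of diameter at most `2⁻ⁿ` under the composition
of the earlier maps. Then the compositions and their partial inverses converge uniformly. The limit
`g` of the inverses is continuous off `Q` and inverts `π` off the collapsed balls. That `π` does not
hit `Q` there holds because the partial inverses send points near `q_k` close to the sphere of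
radius `r_k / 2` about `p_k`, with an error that grows only by a convergent product.
-/

open Filter Topology Set Metric

/-- The closed unit ball `𝔻` in `ℝ^d`. -/
def unitDisc (d : ℕ) : Set (EuclideanSpace ℝ (Fin d)) := Metric.closedBall 0 1

noncomputable section

lemma exists_forall_of_exists_update {α : Type*} [Nonempty α] (P : ℕ → (ℕ → α) → Prop)
    (hP : ∀ n r r', (∀ j ≤ n, r j = r' j) → P n r → P n r')
    (h : ∀ n r, (∀ j < n, P j r) → ∃ a, P n (Function.update r n a)) :
    ∃ r : ℕ → α, ∀ n, P n r := by
  classical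
  let step (n : ℕ) (r : ℕ → α) : ℕ → α :=
    if H : ∀ j < n, P j r then Function.update r n (h n r H).choose else r
  let R (n : ℕ) : ℕ → α := Nat.rec (motive := fun _ ↦ ℕ → α) (fun _ ↦ Classical.arbitrary α) step n
  have hstep : ∀ n r j, j ≠ n → step n r j = r j := fun n r j hj ↦ by
    by_cases H : ∀ j < n, P j r
    · simp only [step, dif_pos H, Function.update_of_ne hj]
    · simp only [step, dif_neg H]
  -- `R n` is the sequence after `n` steps; later steps never change its first `n` terms.
  have hstable : ∀ j m, j < m → R m j = R (j + 1) j := fun j m hm ↦ by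
    induction m, hm using Nat.le_induction with
    | base => rfl
    | succ m hm ih => exact (hstep m (R m) j (by omega)).trans ih
  have hgood : ∀ n, ∀ j < n, P j (R n) := fun n ↦ by
    induction n with
    | zero => intro j hj; omega
    | succ n ih =>
      have hR : R (n + 1) = Function.update (R n) n (h n (R n) ih).choose := dif_pos ih
      intro j hj
      rcases Nat.lt_succ_iff_lt_or_eq.1 hj with hj | rfl
      · exact hP j _ _ (fun i hi ↦ (hstep n (R n) i (by omega)).symm) (ih j hj)
      · rw [hR]; exact (h j (R j) ih).choose_spec
  exact ⟨fun n ↦ R (n + 1) n, fun n ↦ hP n _ _ (fun j hj ↦ hstable j (n + 1) (by omega))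
    (hgood (n + 1) n n.lt_succ_self)⟩

lemma tendstoUniformly_limUnder_of_dist_le_geometric {α X : Type*} [PseudoMetricSpace X]
    [CompleteSpace X] [Nonempty X] {F : ℕ → α → X}
    (hF : ∀ n x, dist (F (n + 1) x) (F n x) ≤ (1 / 2) ^ n) :
    TendstoUniformly F (fun x ↦ limUnder atTop (F · x)) atTop := by
  have hF' : ∀ x n, dist (F n x) (F (n + 1) x) ≤ 2 / 2 / 2 ^ n := fun x n ↦ by
    rw [dist_comm, div_self two_ne_zero, ← one_div_pow]; exact hF n x
  have hlim : Tendsto (fun n : ℕ ↦ (2 : ℝ) / 2 ^ n) atTop (𝓝 0) :=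
    tendsto_const_nhds.div_atTop (tendsto_pow_atTop_atTop_of_one_lt one_lt_two)
  refine Metric.tendstoUniformly_iff.2 fun ε hε ↦ ?_
  filter_upwards [hlim.eventually_lt_const hε] with n hn x
  rw [dist_comm]
  exact (dist_le_of_le_geometric_two_of_tendsto (hF' x)
    (cauchySeq_of_le_geometric_two (hF' x)).tendsto_limUnder n).trans_lt hn

namespace Blowup

variable {E : Type*} [NormedAddCommGroup E] [NormedSpace ℝ E]

def radialMap (p : E) (f : ℝ → ℝ) (x : E) : E := p + (f ‖x - p‖ / ‖x - p‖) • (x - p)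

section radialMap

variable {p x : E} {f g : ℝ → ℝ}

@[simp]
lemma radialMap_self (p : E) (f : ℝ → ℝ) : radialMap p f p = p := by
  simp [radialMap]

lemma norm_radialMap_sub (hx : x ≠ p) : ‖radialMap p f x - p‖ = |f ‖x - p‖| := by
  have hx' : ‖x - p‖ ≠ 0 := norm_ne_zero_iff.2 (sub_ne_zero.2 hx)
  rw [radialMap, add_sub_cancel_left, norm_smul, Real.norm_eq_abs, abs_div, abs_norm,
    div_mul_cancel₀ _ hx']

lemma norm_radialMap_sub_le (p x : E) (f : ℝ → ℝ) : ‖radialMap p f x - p‖ ≤ |f ‖x - p‖| := by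
  rcases eq_or_ne x p with rfl | hx
  · simp
  · exact (norm_radialMap_sub hx).le

lemma radialMap_eq_self (h : f ‖x - p‖ = ‖x - p‖) : radialMap p f x = x := by
  rcases eq_or_ne x p with rfl | hx
  · simp
  · rw [radialMap, h, div_self (norm_ne_zero_iff.2 (sub_ne_zero.2 hx)), one_smul,
      add_sub_cancel]

lemma radialMap_eq_center (h : f ‖x - p‖ = 0) : radialMap p f x = p := by
  simp [radialMap, h]

lemma norm_radialMap_sub_self_le (p x : E) (f : ℝ → ℝ) :
    ‖radialMap p f x - x‖ ≤ |f ‖x - p‖ - ‖x - p‖| := by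
  rcases eq_or_ne x p with rfl | hx
  · simp
  have hx' : ‖x - p‖ ≠ 0 := norm_ne_zero_iff.2 (sub_ne_zero.2 hx)
  have hsub : radialMap p f x - x = (f ‖x - p‖ / ‖x - p‖ - 1) • (x - p) := by
    rw [radialMap, sub_smul, one_smul]; abel
  refine le_of_eq ?_
  calc ‖radialMap p f x - x‖ = |(f ‖x - p‖ / ‖x - p‖ - 1) * ‖x - p‖| := by
        rw [hsub, norm_smul, Real.norm_eq_abs, abs_mul, abs_norm]
    _ = |f ‖x - p‖ - ‖x - p‖| := by rw [sub_mul, div_mul_cancel₀ _ hx', one_mul]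

lemma radialMap_radialMap (hg : 0 < g ‖x - p‖) (hfg : f (g ‖x - p‖) = ‖x - p‖) :
    radialMap p f (radialMap p g x) = x := by
  rcases eq_or_ne x p with rfl | hx
  · simp
  have hx' : ‖x - p‖ ≠ 0 := norm_ne_zero_iff.2 (sub_ne_zero.2 hx)
  have hgx : radialMap p g x - p = (g ‖x - p‖ / ‖x - p‖) • (x - p) := by
    rw [radialMap, add_sub_cancel_left]
  rw [radialMap, norm_radialMap_sub hx, abs_of_pos hg, hfg, hgx, smul_smul,
    div_mul_div_cancel₀ hg.ne', div_self hx', one_smul, add_sub_cancel]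

lemma continuousAt_radialMap (hf : ContinuousAt f ‖x - p‖) (hx : x ≠ p) :
    ContinuousAt (radialMap p f) x := by
  have hx' : ‖x - p‖ ≠ 0 := norm_ne_zero_iff.2 (sub_ne_zero.2 hx)
  have hnorm : ContinuousAt (fun z : E ↦ ‖z - p‖) x := by fun_prop
  exact continuousAt_const.add
    (((hf.comp (f := fun z : E ↦ ‖z - p‖) hnorm).div hnorm hx').smul
      (continuousAt_id.sub continuousAt_const))

lemma continuous_radialMap (hf : Continuous f) (h0 : f 0 = 0) : Continuous (radialMap p f) := by
  refine continuous_iff_continuousAt.2 fun x ↦ ?_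
  rcases eq_or_ne x p with rfl | hx
  · rw [ContinuousAt, radialMap_self, tendsto_iff_norm_sub_tendsto_zero]
    refine squeeze_zero (fun _ ↦ norm_nonneg _) (fun z ↦ norm_radialMap_sub_le x z f) ?_
    have : Tendsto (fun z : E ↦ |f ‖z - x‖|) (𝓝 x) (𝓝 |f ‖x - x‖|) :=
      (hf.comp (by fun_prop)).abs.tendsto x
    simpa [h0] using this
  · exact continuousAt_radialMap hf.continuousAt hx

end radialMap

def squashProfile (r t : ℝ) : ℝ := max 0 (min t (2 * t - r))

def unsquashProfile (r t : ℝ) : ℝ := max t ((t + r) / 2)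

/-- `squash p r` collapses `closedBall p (r / 2)` to `p`, stretches the annulus
`r / 2 ≤ ‖x - p‖ ≤ r` onto `closedBall p r`, and is the identity off `ball p r`;
`unsquash p r` inverts it off `closedBall p (r / 2)`. -/
def squash (p : E) (r : ℝ) : E → E := radialMap p (squashProfile r)

def unsquash (p : E) (r : ℝ) : E → E := radialMap p (unsquashProfile r)

section squash

variable {p x y : E} {r : ℝ}

lemma squash_of_mem_closedBall (hx : x ∈ closedBall p (r / 2)) : squash p r x = p := by
  rw [mem_closedBall, dist_eq_norm] at hx
  exact radialMap_eq_center (max_eq_left (min_le_of_right_le (by linarith)))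

lemma squash_of_le_dist (h : r ≤ dist x p) : squash p r x = x := by
  rw [dist_eq_norm] at h
  refine radialMap_eq_self (max_eq_right_iff.2 ?_ |>.trans (min_eq_left (by linarith)))
  exact le_min (norm_nonneg _) (by linarith [norm_nonneg (x - p)])

lemma squash_eq_self_or_mem (p x : E) (r : ℝ) :
    squash p r x = x ∨ x ∈ ball p r ∧ squash p r x ∈ closedBall p r := by
  refine (le_or_gt r (dist x p)).imp squash_of_le_dist fun hx ↦ ⟨hx, ?_⟩
  rw [mem_closedBall, dist_eq_norm]
  refine (norm_radialMap_sub_le p x _).trans ?_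
  rw [mem_ball, dist_eq_norm] at hx
  rw [abs_of_nonneg (le_max_left _ _)]
  exact (max_le (norm_nonneg _) (min_le_left _ _)).trans hx.le

lemma continuous_squash (p : E) (r : ℝ) : Continuous (squash p r) :=
  continuous_radialMap (by unfold squashProfile; fun_prop) (by simp [squashProfile])

lemma unsquash_of_le_dist (h : r ≤ dist y p) : unsquash p r y = y := by
  rw [dist_eq_norm] at h
  exact radialMap_eq_self (max_eq_left (by linarith))

lemma dist_unsquash (hy : y ≠ p) (h : dist y p ≤ r) :
    dist (unsquash p r y) p = (dist y p + r) / 2 := by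
  rw [dist_eq_norm] at h ⊢
  rw [dist_eq_norm, unsquash, norm_radialMap_sub hy, unsquashProfile,
    max_eq_right (by linarith), abs_of_nonneg (by linarith [norm_nonneg (y - p)])]

lemma half_lt_dist_unsquash (hr : 0 < r) (hy : y ≠ p) : r / 2 < dist (unsquash p r y) p := by
  rcases le_or_gt r (dist y p) with h | h
  · rw [unsquash_of_le_dist h]; linarith
  · rw [dist_unsquash hy h.le]; linarith [dist_pos.2 hy]

lemma unsquash_eq_self_or_mem (hr : 0 < r) (p y : E) :
    unsquash p r y = y ∨ y ∈ ball p r ∧ unsquash p r y ∈ closedBall p r := by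
  refine (le_or_gt r (dist y p)).imp unsquash_of_le_dist fun hy ↦ ⟨hy, ?_⟩
  rcases eq_or_ne y p with rfl | hyp
  · simp [unsquash, hr.le]
  · rw [mem_ball] at hy
    rw [mem_closedBall, dist_unsquash hyp hy.le]; linarith

lemma dist_unsquash_self_le (hr : 0 ≤ r) (p y : E) : dist (unsquash p r y) y ≤ r := by
  rw [dist_eq_norm]
  refine (norm_radialMap_sub_self_le p y _).trans ?_
  rw [unsquashProfile, abs_le]
  constructor <;> cases max_cases ‖y - p‖ ((‖y - p‖ + r) / 2) <;> linarith [norm_nonneg (y - p)]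

lemma squash_unsquash (p y : E) : squash p r (unsquash p r y) = y := by
  rcases eq_or_ne y p with rfl | hy
  · simp [squash, unsquash]
  have hy' : 0 < ‖y - p‖ := norm_pos_iff.2 (sub_ne_zero.2 hy)
  refine radialMap_radialMap (lt_max_of_lt_left hy') ?_
  rw [unsquashProfile, squashProfile]
  cases max_cases ‖y - p‖ ((‖y - p‖ + r) / 2) with
  | inl h => rw [h.1, min_eq_left (by linarith), max_eq_right hy'.le]
  | inr h => rw [h.1, min_eq_right (by linarith), max_eq_right (by linarith)]; ring

lemma unsquash_squash (hx : r / 2 < dist x p) : unsquash p r (squash p r x) = x := by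
  rw [dist_eq_norm] at hx
  rcases le_or_gt r ‖x - p‖ with h | h
  · rw [squash_of_le_dist (by rwa [dist_eq_norm]), unsquash_of_le_dist (by rwa [dist_eq_norm])]
  have hprof : squashProfile r ‖x - p‖ = 2 * ‖x - p‖ - r := by
    rw [squashProfile, min_eq_right (by linarith), max_eq_right (by linarith)]
  refine radialMap_radialMap (by rw [hprof]; linarith) ?_
  rw [hprof, unsquashProfile, max_eq_right (by linarith)]; ring

lemma continuousAt_unsquash (hy : y ≠ p) : ContinuousAt (unsquash p r) y :=
  continuousAt_radialMap (by unfold unsquashProfile; fun_prop) hy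

end squash

variable (q : ℕ → E) (r : ℕ → ℝ)

/-- `unsquashComp q r n` blows up `q 0, …, q (n - 1)` in turn, the `k`-th blow-up happening around
`center q r k`, the current position of `q k`, with radius `r k`. -/
def unsquashComp : ℕ → E → E
  | 0 => id
  | n + 1 => unsquash (unsquashComp n (q n)) (r n) ∘ unsquashComp n

def center (n : ℕ) : E := unsquashComp q r n (q n)

def squashComp : ℕ → E → E
  | 0 => id
  | n + 1 => squashComp n ∘ squash (center q r n) (r n)

lemma unsquashComp_succ (n : ℕ) (y : E) :
    unsquashComp q r (n + 1) y = unsquash (center q r n) (r n) (unsquashComp q r n y) := rfl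

lemma squashComp_succ (n : ℕ) (x : E) :
    squashComp q r (n + 1) x = squashComp q r n (squash (center q r n) (r n) x) := rfl

variable {q r} {n : ℕ}

lemma unsquashComp_congr {r' : ℕ → ℝ} (h : ∀ j < n, r j = r' j) :
    unsquashComp q r n = unsquashComp q r' n := by
  induction n with
  | zero => rfl
  | succ n ih =>
    funext y
    rw [unsquashComp_succ, unsquashComp_succ, center, center,
      ih fun j hj ↦ h j (Nat.lt_succ_of_lt hj), h n n.lt_succ_self]

lemma center_congr {r' : ℕ → ℝ} (h : ∀ j < n, r j = r' j) : center q r n = center q r' n := by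
  rw [center, center, unsquashComp_congr h]

lemma squashComp_congr {r' : ℕ → ℝ} (h : ∀ j < n, r j = r' j) :
    squashComp q r n = squashComp q r' n := by
  induction n with
  | zero => rfl
  | succ n ih =>
    have h' : ∀ j < n, r j = r' j := fun j hj ↦ h j (Nat.lt_succ_of_lt hj)
    funext x
    rw [squashComp_succ, squashComp_succ, ih h', center_congr h', h n n.lt_succ_self]

lemma continuous_squashComp (q : ℕ → E) (r : ℕ → ℝ) (n : ℕ) : Continuous (squashComp q r n) := by
  induction n with
  | zero => exact continuous_id
  | succ n ih => exact ih.comp (continuous_squash _ _)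

lemma squashComp_unsquashComp (q : ℕ → E) (r : ℕ → ℝ) (n : ℕ) (y : E) :
    squashComp q r n (unsquashComp q r n y) = y := by
  induction n with
  | zero => rfl
  | succ n ih => rw [unsquashComp_succ, squashComp_succ, squash_unsquash, ih]

lemma unsquashComp_injective (q : ℕ → E) (r : ℕ → ℝ) (n : ℕ) :
    Function.Injective (unsquashComp q r n) :=
  Function.LeftInverse.injective (squashComp_unsquashComp q r n)

lemma continuousAt_unsquashComp {y : E} (hy : ∀ j < n, y ≠ q j) :
    ContinuousAt (unsquashComp q r n) y := by
  induction n with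
  | zero => exact continuousAt_id
  | succ n ih =>
    have hne : unsquashComp q r n y ≠ center q r n :=
      (unsquashComp_injective q r n).ne (hy n n.lt_succ_self)
    exact (continuousAt_unsquash hne).comp (ih fun j hj ↦ hy j (Nat.lt_succ_of_lt hj))

/-- `le_dist` keeps the later balls away from the balls collapsed earlier, with room shrinking
geometrically; `dist_squashComp_le` makes the maps `squashComp q r n` converge. -/
structure Admissible (K : Set E) (q : ℕ → E) (r : ℕ → ℝ) (n : ℕ) : Prop where
  pos : 0 < r n
  le_pow : r n ≤ (1 / 2) ^ n
  closedBall_subset : closedBall (center q r n) (r n) ⊆ interior K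
  le_dist : ∀ j < n, r n ≤ (1 / 2) ^ n * (dist (center q r n) (center q r j) - r j / 2)
  dist_squashComp_le : ∀ x ∈ closedBall (center q r n) (r n), ∀ y ∈ closedBall (center q r n) (r n),
    dist (squashComp q r n x) (squashComp q r n y) ≤ (1 / 2) ^ n

namespace Admissible

variable {K : Set E} {j : ℕ}

lemma congr {r' : ℕ → ℝ} (h : ∀ j ≤ n, r j = r' j) (hr : Admissible K q r n) :
    Admissible K q r' n := by
  have hc : ∀ j ≤ n, center q r j = center q r' j := fun j hj ↦
    center_congr fun i hi ↦ h i (hi.le.trans hj)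
  obtain ⟨hpos, hle, hsub, hdist, hmod⟩ := hr
  rw [h n le_rfl] at hpos hle hsub hdist hmod
  rw [hc n le_rfl] at hsub hdist hmod
  rw [squashComp_congr fun i hi ↦ h i hi.le] at hmod
  refine ⟨hpos, hle, hsub, fun j hj ↦ ?_, hmod⟩
  rw [← hc j hj.le, ← h j hj.le]
  exact hdist j hj

lemma half_add_two_mul_le_dist (hr : Admissible K q r n) (hj : j < n) :
    r j / 2 + 2 * r n ≤ dist (center q r n) (center q r j) := by
  have hpow : (1 / 2 : ℝ) ^ n ≤ 1 / 2 := pow_le_of_le_one (by norm_num) (by norm_num) (by omega)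
  have hpow' : (0 : ℝ) < (1 / 2) ^ n := by positivity
  have hle := hr.le_dist j hj
  have hgap : 0 < dist (center q r n) (center q r j) - r j / 2 :=
    pos_of_mul_pos_right (hr.pos.trans_le hle) hpow'.le
  nlinarith

lemma half_lt_dist (hr : Admissible K q r n) (hj : j < n) {w : E}
    (hw : w ∈ closedBall (center q r n) (r n)) : r j / 2 < dist w (center q r j) := by
  have hD := hr.half_add_two_mul_le_dist hj
  have htri := dist_triangle (center q r n) w (center q r j)
  rw [mem_closedBall, dist_comm] at hw
  linarith [hr.pos]

lemma le_dist_of_mem_closedBall (hr : Admissible K q r n) (hj : j < n) {x : E}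
    (hx : x ∈ closedBall (center q r j) (r j / 2)) : r n ≤ dist x (center q r n) := by
  have hD := hr.half_add_two_mul_le_dist hj
  have htri := dist_triangle (center q r n) x (center q r j)
  rw [mem_closedBall] at hx
  rw [dist_comm (center q r n) x] at htri
  linarith [hr.pos]

lemma closedBall_half_subset (hr : Admissible K q r n) :
    closedBall (center q r n) (r n / 2) ⊆ interior K :=
  (closedBall_subset_closedBall (by linarith [hr.pos])).trans hr.closedBall_subset

end Admissible

section stages

variable {K : Set E}

lemma mapsTo_unsquashComp {S : Set E} (hr : ∀ j < n, Admissible K q r j) (hS : interior K ⊆ S) :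
    MapsTo (unsquashComp q r n) S S := by
  induction n with
  | zero => exact mapsTo_id S
  | succ n ih =>
    intro y hy
    have hn := hr n n.lt_succ_self
    rw [unsquashComp_succ]
    rcases unsquash_eq_self_or_mem hn.pos (center q r n) (unsquashComp q r n y) with h | h
    · rw [h]; exact ih (fun j hj ↦ hr j (Nat.lt_succ_of_lt hj)) hy
    · exact hS (hn.closedBall_subset h.2)

lemma mapsTo_squashComp {S : Set E} (hr : ∀ j < n, Admissible K q r j) (hS : interior K ⊆ S) :
    MapsTo (squashComp q r n) S S := by
  induction n with
  | zero => exact mapsTo_id S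
  | succ n ih =>
    intro x hx
    rw [squashComp_succ]
    refine ih (fun j hj ↦ hr j (Nat.lt_succ_of_lt hj)) ?_
    rcases squash_eq_self_or_mem (center q r n) x (r n) with h | h
    · rwa [h]
    · exact hS ((hr n n.lt_succ_self).closedBall_subset h.2)

lemma half_lt_dist_unsquashComp (hr : ∀ i < n, Admissible K q r i) {j : ℕ} (hj : j < n) {y : E}
    (hy : y ≠ q j) : r j / 2 < dist (unsquashComp q r n y) (center q r j) := by
  induction n with
  | zero => omega
  | succ n ih =>
    have hn := hr n n.lt_succ_self
    rw [unsquashComp_succ]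
    rcases Nat.lt_succ_iff_lt_or_eq.1 hj with hj | rfl
    · rcases unsquash_eq_self_or_mem hn.pos (center q r n) (unsquashComp q r n y) with h | h
      · rw [h]; exact ih (fun i hi ↦ hr i (Nat.lt_succ_of_lt hi)) hj
      · exact hn.half_lt_dist hj h.2
    · exact half_lt_dist_unsquash hn.pos ((unsquashComp_injective q r j).ne hy)

lemma squashComp_of_mem_closedBall (hr : ∀ i < n, Admissible K q r i) {k : ℕ} (hk : k < n)
    {x : E} (hx : x ∈ closedBall (center q r k) (r k / 2)) : squashComp q r n x = q k := by
  induction n with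
  | zero => omega
  | succ n ih =>
    rw [squashComp_succ]
    rcases Nat.lt_succ_iff_lt_or_eq.1 hk with hk | rfl
    · rw [squash_of_le_dist ((hr n n.lt_succ_self).le_dist_of_mem_closedBall hk hx)]
      exact ih (fun i hi ↦ hr i (Nat.lt_succ_of_lt hi)) hk
    · rw [squash_of_mem_closedBall hx, center, squashComp_unsquashComp]

lemma unsquashComp_of_lt (hr : ∀ i < n, Admissible K q r i) {k : ℕ} (hk : k < n) :
    unsquashComp q r n (q k) = center q r k := by
  induction n with
  | zero => omega
  | succ n ih =>
    rw [unsquashComp_succ]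
    rcases Nat.lt_succ_iff_lt_or_eq.1 hk with hk | rfl
    · have hrk := (hr k (Nat.lt_succ_of_lt hk)).pos
      rw [ih (fun i hi ↦ hr i (Nat.lt_succ_of_lt hi)) hk]
      exact unsquash_of_le_dist ((hr n n.lt_succ_self).le_dist_of_mem_closedBall hk
        (mem_closedBall_self (by linarith)))
    · exact radialMap_self _ _

lemma unsquashComp_squashComp (hr : ∀ i < n, Admissible K q r i) {x : E}
    (hx : ∀ j < n, r j / 2 < dist x (center q r j)) :
    unsquashComp q r n (squashComp q r n x) = x := by
  induction n generalizing x with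
  | zero => rfl
  | succ n ih =>
    have hz : ∀ j < n, r j / 2 < dist (squash (center q r n) (r n) x) (center q r j) := by
      intro j hj
      rcases squash_eq_self_or_mem (center q r n) x (r n) with h | h
      · rw [h]; exact hx j (Nat.lt_succ_of_lt hj)
      · exact (hr n n.lt_succ_self).half_lt_dist hj h.2
    rw [squashComp_succ, unsquashComp_succ, ih (fun i hi ↦ hr i (Nat.lt_succ_of_lt hi)) hz,
      unsquash_squash (hx n n.lt_succ_self)]

lemma Admissible.dist_squashComp_succ_le (hr : Admissible K q r n) (x : E) :
    dist (squashComp q r (n + 1) x) (squashComp q r n x) ≤ (1 / 2) ^ n := by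
  rw [squashComp_succ]
  rcases squash_eq_self_or_mem (center q r n) x (r n) with h | h
  · rw [h, dist_self]; positivity
  · exact hr.dist_squashComp_le _ h.2 _ (ball_subset_closedBall h.1)

lemma Admissible.dist_unsquashComp_succ_le (hr : Admissible K q r n) (y : E) :
    dist (unsquashComp q r (n + 1) y) (unsquashComp q r n y) ≤ (1 / 2) ^ n :=
  (dist_unsquash_self_le hr.pos.le _ _).trans hr.le_pow

/-- If `w` moves at all, the ball of the `i`-th blow-up comes within `γ` of the collapsed ball
of `k`, and `le_dist` then forces its radius to be at most `2 γ / 2 ^ i`. -/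
lemma Admissible.dist_unsquash_le {i k : ℕ} (hr : Admissible K q r i) (hk : k < i) {w : E}
    {γ : ℝ} (hγ : 0 ≤ γ) (hw : dist w (center q r k) ≤ r k / 2 + γ) :
    dist (unsquash (center q r i) (r i) w) (center q r k) ≤
      r k / 2 + γ * (1 + 4 * (1 / 2) ^ i) := by
  have hpow : (0 : ℝ) < (1 / 2) ^ i := by positivity
  rcases unsquash_eq_self_or_mem hr.pos (center q r i) w with h | ⟨hw', hu⟩
  · rw [h]; nlinarith
  rw [mem_ball] at hw'
  rw [mem_closedBall] at hu
  have hD := hr.half_add_two_mul_le_dist hk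
  have htri := dist_triangle_left (center q r i) (center q r k) w
  have htri' := dist_triangle (unsquash (center q r i) (r i) w) (center q r i) (center q r k)
  have hgap : dist (center q r i) (center q r k) - r k / 2 ≤ 2 * γ := by linarith
  have hri : r i ≤ (1 / 2) ^ i * (2 * γ) :=
    (hr.le_dist k hk).trans (mul_le_mul_of_nonneg_left hgap hpow.le)
  nlinarith

lemma dist_unsquashComp_le (hr : ∀ i, Admissible K q r i) {k : ℕ} {y : E} {γ : ℝ} (hγ : 0 ≤ γ)
    (hy : dist (unsquashComp q r (k + 1) y) (center q r k) ≤ r k / 2 + γ) (hn : k < n) :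
    dist (unsquashComp q r n y) (center q r k) ≤
      r k / 2 + γ * Real.exp (∑ i ∈ Finset.range n, 4 * (1 / 2) ^ i) := by
  induction n, hn using Nat.le_induction with
  | base =>
    have : 1 ≤ Real.exp (∑ i ∈ Finset.range (k + 1), 4 * (1 / 2 : ℝ) ^ i) :=
      Real.one_le_exp (Finset.sum_nonneg fun i _ ↦ by positivity)
    nlinarith
  | succ n hn ih =>
    refine ((hr n).dist_unsquash_le hn (by positivity) ih).trans ?_
    rw [Finset.sum_range_succ, Real.exp_add, ← mul_assoc]
    gcongr
    linarith [Real.add_one_le_exp (4 * (1 / 2 : ℝ) ^ n)]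

lemma eventually_dist_unsquashComp_le (hr : ∀ i, Admissible K q r i) (hq : Function.Injective q)
    (k : ℕ) {η : ℝ} (hη : 0 < η) :
    ∀ᶠ y in 𝓝[≠] q k, ∀ n > k, dist (unsquashComp q r n y) (center q r k) ≤ r k / 2 + η := by
  set c := min (r k) (η / Real.exp 8)
  have hc : 0 < c := lt_min (hr k).pos (by positivity)
  have hnear : ∀ᶠ y in 𝓝 (q k), dist (unsquashComp q r k y) (center q r k) < c :=
    (continuousAt_unsquashComp fun j hj ↦ hq.ne hj.ne').eventually (ball_mem_nhds _ hc)
  filter_upwards [nhdsWithin_le_nhds hnear, self_mem_nhdsWithin] with y hy hne n hn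
  set t := dist (unsquashComp q r k y) (center q r k)
  have hbase : dist (unsquashComp q r (k + 1) y) (center q r k) ≤ r k / 2 + t / 2 := by
    rw [unsquashComp_succ, dist_unsquash (p := center q r k) ((unsquashComp_injective q r k).ne hne)
      (hy.le.trans (min_le_left _ _))]
    linarith
  have hsum : Real.exp (∑ i ∈ Finset.range n, 4 * (1 / 2 : ℝ) ^ i) ≤ Real.exp 8 := by
    rw [Real.exp_le_exp, ← Finset.mul_sum]
    linarith [sum_geometric_two_le n]
  have ht : t * Real.exp 8 < η := (lt_div_iff₀ (Real.exp_pos 8)).1 (hy.trans_le (min_le_right _ _))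
  have hdrift := dist_unsquashComp_le hr (by positivity) hbase hn
  nlinarith [dist_nonneg (x := unsquashComp q r k y) (y := center q r k)]

end stages

section radii

variable {K : Set E}

lemma eventually_admissible_update (hqK : ∀ k, q k ∈ interior K) (hq : Function.Injective q)
    (hr : ∀ j < n, Admissible K q r j) :
    ∀ᶠ ρ in 𝓝[>] 0, Admissible K q (Function.update r n ρ) n := by
  set P := center q r n
  set F := squashComp q r n
  have hP : P ∈ interior K := mapsTo_unsquashComp hr subset_rfl (hqK n)
  have hpow : (0 : ℝ) < (1 / 2) ^ n := by positivity
  have hgap : ∀ j < n, 0 < (1 / 2) ^ n * (dist P (center q r j) - r j / 2) := fun j hj ↦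
    mul_pos hpow (sub_pos.2 (half_lt_dist_unsquashComp hr hj (hq.ne hj.ne')))
  have hmod : ∀ᶠ ρ in 𝓝 (0 : ℝ), closedBall P ρ ⊆ F ⁻¹' ball (F P) ((1 / 2) ^ n / 2) :=
    eventually_closedBall_subset ((continuous_squashComp q r n).continuousAt.preimage_mem_nhds
      (ball_mem_nhds _ (by positivity)))
  have hsep : ∀ᶠ ρ in 𝓝 (0 : ℝ), ∀ j ∈ Iio n,
      ρ ≤ (1 / 2) ^ n * (dist P (center q r j) - r j / 2) :=
    (finite_Iio n).eventually_all.2 fun j hj ↦ eventually_le_nhds (hgap j hj)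
  filter_upwards [self_mem_nhdsWithin, nhdsWithin_le_nhds (eventually_le_nhds hpow),
    nhdsWithin_le_nhds (eventually_closedBall_subset (isOpen_interior.mem_nhds hP)),
    nhdsWithin_le_nhds hmod, nhdsWithin_le_nhds hsep] with ρ hρ hρpow hsub hρmod hρsep
  have hagree : ∀ j < n, r j = Function.update r n ρ j := fun j hj ↦
    (Function.update_of_ne hj.ne _ _).symm
  have hcenter : ∀ j ≤ n, center q (Function.update r n ρ) j = center q r j := fun j hj ↦
    (center_congr fun i hi ↦ hagree i (hi.trans_le hj)).symm
  refine ⟨?_, ?_, ?_, fun j hj ↦ ?_, ?_⟩ <;>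
    simp only [Function.update_self, hcenter n le_rfl, ← squashComp_congr hagree]
  · exact hρ
  · exact hρpow
  · exact hsub
  · rw [hcenter j hj.le, ← hagree j hj]
    exact hρsep j hj
  · intro x hx y hy
    have htri := dist_triangle_right (F x) (F y) (F P)
    linarith [mem_ball.1 (hρmod hx), mem_ball.1 (hρmod hy)]

lemma exists_admissible (hqK : ∀ k, q k ∈ interior K) (hq : Function.Injective q) :
    ∃ r : ℕ → ℝ, ∀ n, Admissible K q r n :=
  exists_forall_of_exists_update (fun n r ↦ Admissible K q r n) (fun _ _ _ h hr ↦ hr.congr h)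
    fun _ _ hr ↦ (eventually_admissible_update hqK hq hr).exists

end radii

section limits

variable [CompleteSpace E] {K : Set E}

variable (q r) in
def collapse (x : E) : E := limUnder atTop (squashComp q r · x)

variable (q r) in
def expand (y : E) : E := limUnder atTop (unsquashComp q r · y)

variable (hr : ∀ n, Admissible K q r n)
include hr

lemma tendstoUniformly_squashComp : TendstoUniformly (squashComp q r) (collapse q r) atTop :=
  tendstoUniformly_limUnder_of_dist_le_geometric fun n ↦ (hr n).dist_squashComp_succ_le

lemma tendstoUniformly_unsquashComp :
    TendstoUniformly (unsquashComp q r) (expand q r) atTop :=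
  tendstoUniformly_limUnder_of_dist_le_geometric fun n ↦ (hr n).dist_unsquashComp_succ_le

lemma continuous_collapse : Continuous (collapse q r) :=
  (tendstoUniformly_squashComp hr).continuous (Frequently.of_forall (continuous_squashComp q r))

lemma continuousAt_expand {y : E} (hy : y ∉ range q) : ContinuousAt (expand q r) y := by
  refine continuousAt_of_locally_uniform_approx_of_continuousAt fun u hu ↦ ?_
  obtain ⟨n, hn⟩ := ((tendstoUniformly_unsquashComp hr) u hu).exists
  exact ⟨univ, univ_mem, unsquashComp q r n,
    continuousAt_unsquashComp fun j _ h ↦ hy ⟨j, h.symm⟩, fun z _ ↦ hn z⟩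

lemma mapsTo_collapse (hK : IsClosed K) : MapsTo (collapse q r) K K := fun x hx ↦
  hK.mem_of_tendsto ((tendstoUniformly_squashComp hr).tendsto_at x)
    (Eventually.of_forall fun _ ↦ mapsTo_squashComp (fun j _ ↦ hr j) interior_subset hx)

lemma mapsTo_expand (hK : IsClosed K) : MapsTo (expand q r) K K := fun y hy ↦
  hK.mem_of_tendsto ((tendstoUniformly_unsquashComp hr).tendsto_at y)
    (Eventually.of_forall fun _ ↦ mapsTo_unsquashComp (fun j _ ↦ hr j) interior_subset hy)

lemma collapse_expand (y : E) : collapse q r (expand q r y) = y := by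
  have hlim := (tendstoUniformly_squashComp hr).tendsto_comp (continuous_collapse hr).continuousAt
    ((tendstoUniformly_unsquashComp hr).tendsto_at y)
  simp only [squashComp_unsquashComp] at hlim
  exact tendsto_nhds_unique hlim tendsto_const_nhds

lemma collapse_of_mem_closedBall {k : ℕ} {x : E} (hx : x ∈ closedBall (center q r k) (r k / 2)) :
    collapse q r x = q k :=
  tendsto_nhds_unique ((tendstoUniformly_squashComp hr).tendsto_at x)
    (tendsto_atTop_of_eventually_const (i₀ := k + 1) fun _ hn ↦
      squashComp_of_mem_closedBall (fun i _ ↦ hr i) hn hx)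

/-- If `collapse q r x = q k`, then `squashComp q r n x` tends to `q k` from outside `{q k}`, so
`x = unsquashComp q r n (squashComp q r n x)` is as close as we like to the sphere of
radius `r k / 2` around `center q r k`. -/
lemma collapse_notMem_range (hq : Function.Injective q) {x : E}
    (hx : x ∉ ⋃ k, closedBall (center q r k) (r k / 2)) : collapse q r x ∉ range q := by
  simp only [mem_iUnion, mem_closedBall, not_exists, not_le] at hx
  rintro ⟨k, hk⟩
  have hF : Tendsto (squashComp q r · x) atTop (𝓝[≠] q k) := by
    refine tendsto_nhdsWithin_of_tendsto_nhds_of_eventually_within _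
      (hk ▸ (tendstoUniformly_squashComp hr).tendsto_at x) ?_
    filter_upwards [eventually_gt_atTop k] with n hn hxk
    have hxc := unsquashComp_squashComp (fun i _ ↦ hr i) (fun j _ ↦ hx j) (n := n)
    rw [hxk, unsquashComp_of_lt (fun i _ ↦ hr i) hn] at hxc
    have hxk' := hx k
    rw [← hxc, dist_self] at hxk'
    linarith [(hr k).pos]
  obtain ⟨n, hbound, hn⟩ := ((hF.eventually (eventually_dist_unsquashComp_le hr hq k
    (half_pos (sub_pos.2 (hx k))))).and (eventually_gt_atTop k)).exists
  have hxn := hbound n hn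
  rw [unsquashComp_squashComp (fun i _ ↦ hr i) (fun j _ ↦ hx j)] at hxn
  linarith [hx k]

lemma expand_collapse (hq : Function.Injective q) {x : E}
    (hx : x ∉ ⋃ k, closedBall (center q r k) (r k / 2)) : expand q r (collapse q r x) = x := by
  have hlim := (tendstoUniformly_unsquashComp hr).tendsto_comp
    (continuousAt_expand hr (collapse_notMem_range hr hq hx))
    ((tendstoUniformly_squashComp hr).tendsto_at x)
  simp only [mem_iUnion, mem_closedBall, not_exists, not_le] at hx
  simp only [unsquashComp_squashComp (fun i _ ↦ hr i) (fun j _ ↦ hx j)] at hlim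
  exact tendsto_nhds_unique hlim tendsto_const_nhds

lemma expand_notMem_iUnion {y : E} (hy : y ∉ range q) :
    expand q r y ∉ ⋃ k, closedBall (center q r k) (r k / 2) := fun h ↦
  let ⟨k, hk⟩ := mem_iUnion.1 h
  hy ⟨k, (collapse_of_mem_closedBall hr hk).symm.trans (collapse_expand hr y)⟩

lemma image_collapse (hK : IsClosed K) : collapse q r '' K = K :=
  (mapsTo_collapse hr hK).image_subset.antisymm fun y hy ↦
    ⟨expand q r y, mapsTo_expand hr hK hy, collapse_expand hr y⟩

lemma inter_preimage_collapse_singleton (hq : Function.Injective q) (k : ℕ) :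
    K ∩ collapse q r ⁻¹' {q k} = closedBall (center q r k) (r k / 2) := by
  refine Subset.antisymm (fun x ⟨_, hxk⟩ ↦ ?_) fun x hx ↦
    ⟨interior_subset ((hr k).closedBall_half_subset hx), collapse_of_mem_closedBall hr hx⟩
  by_cases hx : x ∈ ⋃ j, closedBall (center q r j) (r j / 2)
  · obtain ⟨j, hj⟩ := mem_iUnion.1 hx
    rwa [← hq ((collapse_of_mem_closedBall hr hj).symm.trans hxk)]
  · exact (collapse_notMem_range hr hq hx ⟨k, hxk.symm⟩).elim

lemma invOn_expand_collapse (hq : Function.Injective q) :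
    InvOn (expand q r) (collapse q r) (K \ ⋃ k, closedBall (center q r k) (r k / 2))
      (K \ range q) :=
  ⟨fun _ hx ↦ expand_collapse hr hq hx.2, fun y _ ↦ collapse_expand hr y⟩

lemma bijOn_collapse (hK : IsClosed K) (hq : Function.Injective q) :
    BijOn (collapse q r) (K \ ⋃ k, closedBall (center q r k) (r k / 2)) (K \ range q) :=
  (invOn_expand_collapse hr hq).bijOn
    (fun _ hx ↦ ⟨mapsTo_collapse hr hK hx.1, collapse_notMem_range hr hq hx.2⟩)
    (fun _ hy ↦ ⟨mapsTo_expand hr hK hy.1, expand_notMem_iUnion hr hy.2⟩)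

end limits

end Blowup

end

open Blowup

theorem blowup_lemma_general (d : ℕ)
    (q : ℕ → EuclideanSpace ℝ (Fin d)) (hqinj : Function.Injective q)
    (hq : ∀ k, q k ∈ interior (unitDisc d)) :
    ∃ (ε : ℕ → ℝ) (p : ℕ → EuclideanSpace ℝ (Fin d))
      (π : EuclideanSpace ℝ (Fin d) → EuclideanSpace ℝ (Fin d)),
      (∀ k, 0 < ε k) ∧ Summable ε ∧
      (∀ k, Metric.closedBall (p k) (ε k) ⊆ interior (unitDisc d)) ∧
      -- (1) π is continuous and surjective (as a self-map of 𝔻)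
      ContinuousOn π (unitDisc d) ∧ Set.MapsTo π (unitDisc d) (unitDisc d) ∧
      π '' unitDisc d = unitDisc d ∧
      -- (2) π⁻¹({q_k}) = closedBall (p_k, ε_k) for each k
      (∀ k, unitDisc d ∩ π ⁻¹' {q k} = Metric.closedBall (p k) (ε k)) ∧
      -- (3) π restricted to 𝔻 ∖ ∪_k closedBall (p_k, ε_k) is a homeomorphism onto its
      -- image, which equals 𝔻 ∖ Q
      Set.InjOn π (unitDisc d \ ⋃ k, Metric.closedBall (p k) (ε k)) ∧
      π '' (unitDisc d \ ⋃ k, Metric.closedBall (p k) (ε k)) = unitDisc d \ Set.range q ∧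
      ∃ g : EuclideanSpace ℝ (Fin d) → EuclideanSpace ℝ (Fin d),
        ContinuousOn g (unitDisc d \ Set.range q) ∧
        Set.InvOn g π (unitDisc d \ ⋃ k, Metric.closedBall (p k) (ε k))
          (unitDisc d \ Set.range q) := by
  obtain ⟨r, hr⟩ := exists_admissible hq hqinj
  have hK : IsClosed (unitDisc d) := isClosed_closedBall
  have hbij := bijOn_collapse hr hK hqinj
  refine ⟨fun k ↦ r k / 2, center q r, collapse q r, fun k ↦ half_pos (hr k).pos, ?_,
    fun k ↦ (hr k).closedBall_half_subset, (continuous_collapse hr).continuousOn,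
    mapsTo_collapse hr hK, image_collapse hr hK, inter_preimage_collapse_singleton hr hqinj,
    hbij.injOn, hbij.image_eq, expand q r,
    fun y hy ↦ (continuousAt_expand hr hy.2).continuousWithinAt, invOn_expand_collapse hr hqinj⟩
  exact summable_geometric_two.of_nonneg_of_le (fun k ↦ (half_pos (hr k).pos).le)
    fun k ↦ by linarith [(hr k).pos, (hr k).le_pow]

/-- **The blow-up lemma** (Lemma `BlowUpLemma`): given a countable set
`Q = {q_k : k ∈ ℕ}` of distinct points in the interior of the closed unit ball
`𝔻 ⊆ ℝ^d` (`d ∈ {1,2}`), there exist a summable sequence of positive radii `ε_k`, centers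
`p_k` with `closedBall (p_k, ε_k) ⊆ int 𝔻`, and a map `π : 𝔻 → 𝔻` which is a continuous
surjection, satisfies `π⁻¹({q_k}) = closedBall (p_k, ε_k)` for each `k`, and restricts to
a homeomorphism from `𝔻 ∖ ∪_k closedBall (p_k, ε_k)` onto `𝔻 ∖ Q`. -/
theorem blowup_lemma (d : ℕ) (hd : d = 1 ∨ d = 2)
    (q : ℕ → EuclideanSpace ℝ (Fin d)) (hqinj : Function.Injective q)
    (hq : ∀ k, q k ∈ interior (unitDisc d)) :
    ∃ (ε : ℕ → ℝ) (p : ℕ → EuclideanSpace ℝ (Fin d))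
      (π : EuclideanSpace ℝ (Fin d) → EuclideanSpace ℝ (Fin d)),
      (∀ k, 0 < ε k) ∧ Summable ε ∧
      (∀ k, Metric.closedBall (p k) (ε k) ⊆ interior (unitDisc d)) ∧
      -- (1) π is continuous and surjective (as a self-map of 𝔻)
      ContinuousOn π (unitDisc d) ∧ Set.MapsTo π (unitDisc d) (unitDisc d) ∧
      π '' unitDisc d = unitDisc d ∧
      -- (2) π⁻¹({q_k}) = closedBall (p_k, ε_k) for each k
      (∀ k, unitDisc d ∩ π ⁻¹' {q k} = Metric.closedBall (p k) (ε k)) ∧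
      -- (3) π restricted to 𝔻 ∖ ∪_k closedBall (p_k, ε_k) is a homeomorphism onto its
      -- image, which equals 𝔻 ∖ Q
      Set.InjOn π (unitDisc d \ ⋃ k, Metric.closedBall (p k) (ε k)) ∧
      π '' (unitDisc d \ ⋃ k, Metric.closedBall (p k) (ε k)) = unitDisc d \ Set.range q ∧
      ∃ g : EuclideanSpace ℝ (Fin d) → EuclideanSpace ℝ (Fin d),
        ContinuousOn g (unitDisc d \ Set.range q) ∧
        Set.InvOn g π (unitDisc d \ ⋃ k, Metric.closedBall (p k) (ε k))
          (unitDisc d \ Set.range q) :=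
  blowup_lemma_general d q hqinj hq
end

section
/- Let d ≥ 1 and let g : [−1,1]^d → [−1,1]^d be a homeomorphism that restricts to the identity on the boundary ∂[−1,1]^d. Then there exists a homeomorphism f : [−1,1]^{d+1} → [−1,1]^{d+1} such that f restricts to the identity on ∂[−1,1]^{d+1}, f(x,0) = (g(x),0) for all x ∈ [−1,1]^d, and the nonwandering set of f satisfies NW(f) ⊆ ([−1,1]^d × {0}) ∪ ∂[−1,1]^{d+1}. -/
open Filter Topology Set

/-- The cube `[-1,1]^d`. -/
def cube (d : ℕ) : Set (Fin d → ℝ) := {x | ∀ i, x i ∈ Set.Icc (-1 : ℝ) 1}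

/-- The cube `[-1,1]^{d+1}`, viewed as `[-1,1]^d × [-1,1]`. -/
def cubeSucc (d : ℕ) : Set ((Fin d → ℝ) × ℝ) := cube d ×ˢ Set.Icc (-1 : ℝ) 1

/-- The nonwandering set of a self-map `F` of a subset `D`: points `x ∈ D` such that
every neighborhood `U` of `x` (relative to `D`) satisfies `F^n(U) ∩ U ≠ ∅` for some
`n ≥ 1`. -/
def nonwanderingOn {Y : Type*} [TopologicalSpace Y] (F : Y → Y) (D : Set Y) : Set Y :=
  {x ∈ D | ∀ U : Set Y, IsOpen U → x ∈ U → ∃ n ≥ 1, ∃ y ∈ U ∩ D, F^[n] y ∈ U ∩ D}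

/-
Conjugating `g` by the dilation of ratio `s` gives the Alexander isotopy `g_s`, supported in
the ball of radius `s` and tending to the identity as `s → 0` (the cube is the unit ball of
the sup norm). On the level `t` of `[-1,1]^d × [-1,1]`, `f` applies `g_{1-|t|}` and then pushes
the level away from `0` by `t ↦ t (1 + c (1 - |t|))`, where `c = 1 - ‖y‖` at the new point `y`
vanishes on the sides of the cube. So `f` is `g` on level `0` and the identity on the boundary,
`|t|` never decreases along `f` and increases strictly at interior points off level `0`, which
are therefore wandering. The inverse of `f` is continuous by compactness.
-/

open Metric (ball closedBall)

theorem IsCompact.continuousOn_invFunOn {X : Type*} [TopologicalSpace X] [T2Space X]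
    [Nonempty X] {f : X → X} {K : Set X} (hK : IsCompact K) (hf : ContinuousOn f K)
    (hbij : BijOn f K K) : ContinuousOn (Function.invFunOn f K) K := by
  have hinv := hbij.invOn_invFunOn
  refine continuousOn_iff_isClosed.2 fun C hC => ⟨f '' (C ∩ K), ?_, ?_⟩
  · exact ((hK.inter_left hC).image_of_continuousOn (hf.mono inter_subset_right)).isClosed
  · ext y
    constructor
    · rintro ⟨hyC, hyK⟩
      exact ⟨⟨Function.invFunOn f K y, ⟨hyC, hbij.surjOn.mapsTo_invFunOn hyK⟩,
        hinv.2 hyK⟩, hyK⟩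
    · rintro ⟨⟨x, ⟨hxC, hxK⟩, rfl⟩, hyK⟩
      exact ⟨by rwa [mem_preimage, hinv.1 hxK], hyK⟩

theorem notMem_nonwanderingOn_of_lyapunov {Y : Type*} [TopologicalSpace Y] {F : Y → Y} {D : Set Y}
    (hFD : MapsTo F D D) (hF : ContinuousOn F D) {φ : Y → ℝ} (hφ : Continuous φ)
    (hmono : ∀ q ∈ D, φ q ≤ φ (F q)) {p : Y} (hp : φ p < φ (F p)) :
    p ∉ nonwanderingOn F D := by
  rintro ⟨hpD, hpNW⟩
  -- near `p` the level `m` lies above `φ` and below `φ ∘ F`; orbits never come back below it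
  set m := (φ p + φ (F p)) / 2
  obtain ⟨u, hu, hueq⟩ := continuousOn_iff'.1 (hφ.comp_continuousOn hF) (Ioi m) isOpen_Ioi
  have hu_iff : ∀ q ∈ D, q ∈ u ↔ m < φ (F q) := fun q hq => by
    simpa [hq] using (congrArg (q ∈ ·) hueq).symm
  obtain ⟨n, hn, y, ⟨⟨hyu, -⟩, hyD⟩, ⟨-, hny⟩, -⟩ := hpNW (u ∩ φ ⁻¹' Iio m)
    (hu.inter (isOpen_Iio.preimage hφ))
    ⟨(hu_iff p hpD).2 (by simp only [m]; linarith), show φ p < m by simp only [m]; linarith⟩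
  have horbit : Monotone fun k => φ (F^[k] y) := monotone_nat_of_le_succ fun k => by
    simpa only [Function.iterate_succ_apply'] using hmono _ (hFD.iterate k hyD)
  have hFy : φ (F y) ≤ φ (F^[n] y) := by simpa using horbit hn
  exact absurd ((hu_iff y hyD).1 hyu) (not_lt.2 (hFy.trans (le_of_lt hny)))

theorem bijOn_fiberwise_fst {α β : Type*} {s : Set α} {t : Set β} {φ : β → α → α}
    (h : ∀ b ∈ t, BijOn (φ b) s s) :
    BijOn (fun p : α × β => (φ p.2 p.1, p.2)) (s ×ˢ t) (s ×ˢ t) := by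
  refine ⟨fun p hp => ⟨(h _ hp.2).mapsTo hp.1, hp.2⟩, ?_, ?_⟩
  · rintro ⟨x, b⟩ ⟨hx, hb⟩ ⟨x', b'⟩ ⟨hx', -⟩ he
    simp only [Prod.mk.injEq] at he
    obtain ⟨he, rfl⟩ := he
    rw [(h b hb).injOn (x₁ := x) hx hx' he]
  · rintro ⟨y, b⟩ ⟨hy, hb⟩
    obtain ⟨x, hx, rfl⟩ := (h b hb).surjOn hy
    exact ⟨(x, b), ⟨hx, hb⟩, rfl⟩

theorem bijOn_fiberwise_snd {α β : Type*} {s : Set α} {t : Set β} {ψ : α → β → β}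
    (h : ∀ a ∈ s, BijOn (ψ a) t t) :
    BijOn (fun p : α × β => (p.1, ψ p.1 p.2)) (s ×ˢ t) (s ×ˢ t) := by
  refine ⟨fun p hp => ⟨hp.1, (h _ hp.1).mapsTo hp.2⟩, ?_, ?_⟩
  · rintro ⟨a, y⟩ ⟨ha, hy⟩ ⟨a', y'⟩ ⟨-, hy'⟩ he
    simp only [Prod.mk.injEq] at he
    obtain ⟨rfl, he⟩ := he
    rw [(h a ha).injOn (x₁ := y) hy hy' he]
  · rintro ⟨a, z⟩ ⟨ha, hz⟩
    obtain ⟨y, hy, rfl⟩ := (h a ha).surjOn hz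
    exact ⟨(a, y), ⟨ha, hy⟩, rfl⟩

section Alexander

variable {E : Type*} [NormedAddCommGroup E] {g g' : E → E}

open scoped Classical in
noncomputable def extendById (g : E → E) (x : E) : E :=
  if x ∈ closedBall (0 : E) 1 then g x else x

theorem extendById_of_norm_le {x : E} (hx : ‖x‖ ≤ 1) : extendById g x = g x :=
  if_pos (mem_closedBall_zero_iff.2 hx)

theorem extendById_of_one_lt_norm {x : E} (hx : 1 < ‖x‖) : extendById g x = x :=
  if_neg (by simpa using hx)

open scoped Classical in
theorem continuous_extendById (hgc : ContinuousOn g (closedBall 0 1))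
    (hgbd : EqOn g id (frontier (closedBall 0 1))) : Continuous (extendById g) :=
  continuous_if hgbd (by rwa [ofPred_mem_eq, Metric.isClosed_closedBall.closure_eq]) continuousOn_id

theorem leftInverse_extendById (hg : MapsTo g (closedBall 0 1) (closedBall 0 1))
    (h : LeftInvOn g' g (closedBall 0 1)) :
    Function.LeftInverse (extendById g') (extendById g) := by
  intro x
  by_cases hx : ‖x‖ ≤ 1
  · rw [extendById_of_norm_le hx, extendById_of_norm_le (mem_closedBall_zero_iff.1
      (hg (mem_closedBall_zero_iff.2 hx))), h (mem_closedBall_zero_iff.2 hx)]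
  · rw [not_le] at hx
    rw [extendById_of_one_lt_norm hx, extendById_of_one_lt_norm hx]

variable [NormedSpace ℝ E]

theorem extendById_of_one_le_norm (hgbd : EqOn g id (frontier (closedBall 0 1))) {x : E}
    (hx : 1 ≤ ‖x‖) : extendById g x = x := by
  rcases hx.eq_or_lt with hx | hx
  · rw [extendById_of_norm_le hx.ge]
    exact hgbd (by rw [frontier_closedBall _ one_ne_zero]; exact mem_sphere_zero_iff_norm.2 hx.symm)
  · exact extendById_of_one_lt_norm hx

noncomputable def alexanderIsotopy (g : E → E) (s : ℝ) (x : E) : E :=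
  if s = 0 then x else s • extendById g (s⁻¹ • x)

@[simp]
theorem alexanderIsotopy_zero (g : E → E) : alexanderIsotopy g 0 = id := by
  ext x
  simp [alexanderIsotopy]

theorem alexanderIsotopy_of_ne_zero {s : ℝ} (hs : s ≠ 0) (x : E) :
    alexanderIsotopy g s x = s • extendById g (s⁻¹ • x) :=
  if_neg hs

theorem alexanderIsotopy_one {x : E} (hx : ‖x‖ ≤ 1) : alexanderIsotopy g 1 x = g x := by
  rw [alexanderIsotopy_of_ne_zero one_ne_zero, inv_one, one_smul, one_smul,
    extendById_of_norm_le hx]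

theorem leftInverse_alexanderIsotopy (h : Function.LeftInverse (extendById g') (extendById g))
    (s : ℝ) : Function.LeftInverse (alexanderIsotopy g' s) (alexanderIsotopy g s) := by
  intro x
  rcases eq_or_ne s 0 with rfl | hs
  · simp
  · rw [alexanderIsotopy_of_ne_zero hs, alexanderIsotopy_of_ne_zero hs, inv_smul_smul₀ hs, h,
      smul_inv_smul₀ hs]

theorem alexanderIsotopy_of_le_norm (hgbd : EqOn g id (frontier (closedBall 0 1))) {s : ℝ}
    (hs : 0 ≤ s) {x : E} (hsx : s ≤ ‖x‖) : alexanderIsotopy g s x = x := by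
  rcases hs.eq_or_lt with rfl | hs
  · simp
  · rw [alexanderIsotopy_of_ne_zero hs.ne', extendById_of_one_le_norm hgbd,
      smul_inv_smul₀ hs.ne']
    rwa [norm_smul, norm_inv, Real.norm_of_nonneg hs.le, inv_mul_eq_div, one_le_div hs]

theorem norm_alexanderIsotopy_le (hg : MapsTo g (closedBall 0 1) (closedBall 0 1)) {s : ℝ}
    (hs : 0 ≤ s) (x : E) : ‖alexanderIsotopy g s x‖ ≤ max s ‖x‖ := by
  rcases hs.eq_or_lt with rfl | hs
  · simp
  rw [alexanderIsotopy_of_ne_zero hs.ne']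
  by_cases hx : ‖s⁻¹ • x‖ ≤ 1
  · rw [extendById_of_norm_le hx, norm_smul, Real.norm_of_nonneg hs.le]
    have := mem_closedBall_zero_iff.1 (hg (mem_closedBall_zero_iff.2 hx))
    exact (mul_le_of_le_one_right hs.le this).trans (le_max_left _ _)
  · rw [extendById_of_one_lt_norm (not_le.1 hx), smul_inv_smul₀ hs.ne']
    exact le_max_right _ _

theorem norm_alexanderIsotopy_sub_le (hg : MapsTo g (closedBall 0 1) (closedBall 0 1))
    (hgbd : EqOn g id (frontier (closedBall 0 1))) {s : ℝ} (hs : 0 ≤ s) (x : E) :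
    ‖alexanderIsotopy g s x - x‖ ≤ 2 * s := by
  rcases le_total s ‖x‖ with hsx | hxs
  · rw [alexanderIsotopy_of_le_norm hgbd hs hsx, sub_self, norm_zero]
    linarith
  · have := norm_alexanderIsotopy_le hg hs x
    rw [max_eq_left hxs] at this
    linarith [norm_sub_le (alexanderIsotopy g s x) x]

theorem mapsTo_alexanderIsotopy (hg : MapsTo g (closedBall 0 1) (closedBall 0 1)) {s : ℝ}
    (hs : s ∈ Icc (0 : ℝ) 1) :
    MapsTo (alexanderIsotopy g s) (closedBall 0 1) (closedBall 0 1) :=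
  fun x hx => mem_closedBall_zero_iff.2 <| (norm_alexanderIsotopy_le hg hs.1 x).trans <|
    max_le hs.2 (mem_closedBall_zero_iff.1 hx)

theorem bijOn_alexanderIsotopy (hg : BijOn g (closedBall 0 1) (closedBall 0 1)) {s : ℝ}
    (hs : s ∈ Icc (0 : ℝ) 1) :
    BijOn (alexanderIsotopy g s) (closedBall 0 1) (closedBall 0 1) := by
  set g' := Function.invFunOn g (closedBall (0 : E) 1)
  have hinv : InvOn g' g (closedBall 0 1) (closedBall 0 1) := hg.invOn_invFunOn
  have hg' : MapsTo g' (closedBall 0 1) (closedBall 0 1) := hg.surjOn.mapsTo_invFunOn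
  refine InvOn.bijOn (f' := alexanderIsotopy g' s) ⟨fun x _ => ?_, fun x _ => ?_⟩
    (mapsTo_alexanderIsotopy hg.mapsTo hs) (mapsTo_alexanderIsotopy hg' hs)
  · exact leftInverse_alexanderIsotopy (leftInverse_extendById hg.mapsTo hinv.1) s x
  · exact leftInverse_alexanderIsotopy (leftInverse_extendById hg' hinv.2) s x

theorem continuousOn_alexanderIsotopy (hgc : ContinuousOn g (closedBall 0 1))
    (hg : MapsTo g (closedBall 0 1) (closedBall 0 1))
    (hgbd : EqOn g id (frontier (closedBall 0 1))) :
    ContinuousOn (fun p : ℝ × E => alexanderIsotopy g p.1 p.2) (Ici 0 ×ˢ univ) := by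
  rintro ⟨s, x⟩ ⟨hs, -⟩
  rcases (mem_Ici.1 hs).eq_or_lt with rfl | hs
  · -- `‖alexanderIsotopy g s y - y‖ ≤ 2 s` forces continuity at level `0`
    refine tendsto_iff_norm_sub_tendsto_zero.2 (squeeze_zero' (Eventually.of_forall fun _ =>
      norm_nonneg _) ?_ (g := fun q : ℝ × E => 2 * q.1 + ‖q.2 - x‖) ?_)
    · filter_upwards [self_mem_nhdsWithin] with q hq
      calc ‖alexanderIsotopy g q.1 q.2 - alexanderIsotopy g 0 x‖
          = ‖(alexanderIsotopy g q.1 q.2 - q.2) + (q.2 - x)‖ := by simp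
        _ ≤ 2 * q.1 + ‖q.2 - x‖ :=
          (norm_add_le _ _).trans (by gcongr; exact norm_alexanderIsotopy_sub_le hg hgbd hq.1 _)
    · have : Continuous fun q : ℝ × E => 2 * q.1 + ‖q.2 - x‖ := by fun_prop
      simpa using (this.tendsto (0, x)).mono_left nhdsWithin_le_nhds
  · have hG := continuous_extendById hgc hgbd
    have : (fun p : ℝ × E => alexanderIsotopy g p.1 p.2) =ᶠ[𝓝 (s, x)]
        fun p => p.1 • extendById g (p.1⁻¹ • p.2) := by
      filter_upwards [(continuous_fst.isOpen_preimage _ isOpen_Ioi).mem_nhds hs] with p hp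
      exact alexanderIsotopy_of_ne_zero (ne_of_gt hp) _
    refine (ContinuousAt.congr ?_ this.symm).continuousWithinAt
    exact continuousAt_fst.smul (hG.continuousAt.comp ((continuousAt_fst.inv₀ hs.ne').smul
      continuousAt_snd))

end Alexander

def pushAway (c t : ℝ) : ℝ := t * (1 + c * (1 - |t|))

theorem pushAway_zero_left (t : ℝ) : pushAway 0 t = t := by
  simp [pushAway]

theorem pushAway_zero_right (c : ℝ) : pushAway c 0 = 0 := by
  simp [pushAway]

theorem pushAway_of_abs_eq_one (c : ℝ) {t : ℝ} (ht : |t| = 1) : pushAway c t = t := by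
  simp [pushAway, ht]

theorem continuous_pushAway : Continuous fun p : ℝ × ℝ => pushAway p.1 p.2 := by
  unfold pushAway
  fun_prop

theorem abs_pushAway {c t : ℝ} (hc : 0 ≤ c) (ht : |t| ≤ 1) :
    |pushAway c t| = |t| + c * |t| * (1 - |t|) := by
  rw [pushAway, abs_mul, abs_of_nonneg (by nlinarith : 0 ≤ 1 + c * (1 - |t|))]
  ring

theorem strictMonoOn_pushAway {c : ℝ} (hc₀ : 0 ≤ c) (hc₁ : c ≤ 1) :
    StrictMonoOn (pushAway c) (Icc (-1) 1) := by
  rintro s ⟨hs₁, hs₂⟩ t ⟨ht₁, ht₂⟩ hst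
  simp only [pushAway]
  have hts : 0 < t - s := sub_pos.2 hst
  have hc : 0 ≤ 1 - c := sub_nonneg.2 hc₁
  rcases le_or_gt 0 s with hs | hs
  · rw [abs_of_nonneg hs, abs_of_nonneg (hs.trans hst.le)]
    nlinarith [mul_nonneg (mul_nonneg hc₀ hts.le) (sub_nonneg.2 ht₂), mul_nonneg hc hts.le,
      mul_pos (mul_pos hts (by linarith : 0 < 1 - s)) (by linarith : 0 < 1 + c)]
  rcases le_or_gt 0 t with ht | ht
  · rw [abs_of_neg hs, abs_of_nonneg ht]
    nlinarith [mul_nonneg (mul_nonneg hc₀ ht) (sub_nonneg.2 ht₂),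
      mul_nonneg (mul_nonneg hc₀ (neg_nonneg.2 hs.le)) (neg_le_iff_add_nonneg.1 hs₁)]
  · rw [abs_of_neg hs, abs_of_neg ht]
    nlinarith [mul_nonneg (mul_nonneg hc₀ hts.le) (neg_le_iff_add_nonneg.1 hs₁),
      mul_nonneg hc hts.le,
      mul_pos (mul_pos hts (by linarith : 0 < 1 + t)) (by linarith : 0 < 1 + c)]

theorem bijOn_pushAway {c : ℝ} (hc₀ : 0 ≤ c) (hc₁ : c ≤ 1) :
    BijOn (pushAway c) (Icc (-1) 1) (Icc (-1) 1) := by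
  have hmono := strictMonoOn_pushAway hc₀ hc₁
  have hends : pushAway c (-1) = -1 ∧ pushAway c 1 = 1 :=
    ⟨pushAway_of_abs_eq_one c (by simp), pushAway_of_abs_eq_one c (by simp)⟩
  refine ⟨fun t ht => ?_, hmono.injOn, ?_⟩
  · have h₁ := hmono.monotoneOn (left_mem_Icc.2 (by norm_num)) ht ht.1
    have h₂ := hmono.monotoneOn ht (right_mem_Icc.2 (by norm_num)) ht.2
    rw [hends.1] at h₁
    rw [hends.2] at h₂
    exact ⟨h₁, h₂⟩
  · have := intermediate_value_Icc (by norm_num : (-1 : ℝ) ≤ 1)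
      (continuous_pushAway.comp (Continuous.prodMk_right c)).continuousOn
    simp only [Function.comp_def, hends.1, hends.2] at this
    exact this

theorem one_sub_abs_mem_Icc {t : ℝ} (ht : t ∈ Icc (-1 : ℝ) 1) : 1 - |t| ∈ Icc (0 : ℝ) 1 :=
  ⟨sub_nonneg.2 (abs_le.2 ht), sub_le_self _ (abs_nonneg t)⟩

section Suspension

variable {E : Type*} [NormedAddCommGroup E] [NormedSpace ℝ E] {g : E → E}

noncomputable def levelwiseAlexander (g : E → E) (p : E × ℝ) : E × ℝ :=
  (alexanderIsotopy g (1 - |p.2|) p.1, p.2)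

noncomputable def verticalPush (p : E × ℝ) : E × ℝ :=
  (p.1, pushAway (1 - ‖p.1‖) p.2)

noncomputable def suspensionMap (g : E → E) : E × ℝ → E × ℝ :=
  verticalPush ∘ levelwiseAlexander g

theorem continuousOn_suspensionMap (hgc : ContinuousOn g (closedBall 0 1))
    (hg : MapsTo g (closedBall 0 1) (closedBall 0 1))
    (hgbd : EqOn g id (frontier (closedBall 0 1))) :
    ContinuousOn (suspensionMap g) (closedBall 0 1 ×ˢ Icc (-1) 1) := by
  have hlevel : MapsTo (fun p : E × ℝ => (1 - |p.2|, p.1)) (closedBall 0 1 ×ˢ Icc (-1) 1)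
      (Ici 0 ×ˢ univ) := fun p hp => ⟨(one_sub_abs_mem_Icc hp.2).1, trivial⟩
  have hpush : Continuous (verticalPush (E := E)) := by
    unfold verticalPush pushAway
    fun_prop
  refine hpush.comp_continuousOn (ContinuousOn.prodMk ?_ continuousOn_snd)
  exact (continuousOn_alexanderIsotopy hgc hg hgbd).comp (by fun_prop) hlevel

theorem bijOn_suspensionMap (hg : BijOn g (closedBall 0 1) (closedBall 0 1)) :
    BijOn (suspensionMap g) (closedBall 0 1 ×ˢ Icc (-1) 1) (closedBall 0 1 ×ˢ Icc (-1) 1) :=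
  (bijOn_fiberwise_snd fun _ hx => bijOn_pushAway (sub_nonneg.2 (mem_closedBall_zero_iff.1 hx))
    (sub_le_self _ (norm_nonneg _))).comp
  (bijOn_fiberwise_fst fun _ ht => bijOn_alexanderIsotopy hg (one_sub_abs_mem_Icc ht))

theorem suspensionMap_eq_self_of_mem_frontier (hgbd : EqOn g id (frontier (closedBall 0 1))) :
    EqOn (suspensionMap g) id (frontier (closedBall (0 : E) 1 ×ˢ Icc (-1) 1)) := by
  rintro ⟨x, t⟩ hp
  rw [frontier_prod_eq, frontier_Icc (by norm_num), frontier_closedBall _ one_ne_zero,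
    closure_Icc] at hp
  rcases hp with ⟨-, ht⟩ | ⟨hx, ht⟩
  · have ht : |t| = 1 := by rcases ht with rfl | rfl <;> simp
    simp [suspensionMap, levelwiseAlexander, verticalPush, ht, pushAway_of_abs_eq_one]
  · rw [mem_sphere_zero_iff_norm] at hx
    have hA : alexanderIsotopy g (1 - |t|) x = x :=
      alexanderIsotopy_of_le_norm hgbd (one_sub_abs_mem_Icc ht).1
        (hx ▸ (one_sub_abs_mem_Icc ht).2)
    simp [suspensionMap, levelwiseAlexander, verticalPush, hA, hx, pushAway_zero_left]

theorem suspensionMap_zero {x : E} (hx : x ∈ closedBall 0 1) :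
    suspensionMap g (x, 0) = (g x, 0) := by
  simp [suspensionMap, levelwiseAlexander, verticalPush, alexanderIsotopy_one
    (mem_closedBall_zero_iff.1 hx), pushAway_zero_right]

theorem abs_snd_suspensionMap (hg : MapsTo g (closedBall 0 1) (closedBall 0 1)) {p : E × ℝ}
    (hp : p ∈ closedBall 0 1 ×ˢ Icc (-1) 1) :
    |(suspensionMap g p).2| =
      |p.2| + (1 - ‖alexanderIsotopy g (1 - |p.2|) p.1‖) * |p.2| * (1 - |p.2|) :=
  abs_pushAway (sub_nonneg.2 (mem_closedBall_zero_iff.1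
    (mapsTo_alexanderIsotopy hg (one_sub_abs_mem_Icc hp.2) hp.1))) (abs_le.2 hp.2)

theorem abs_snd_le_abs_snd_suspensionMap (hg : MapsTo g (closedBall 0 1) (closedBall 0 1))
    {p : E × ℝ} (hp : p ∈ closedBall 0 1 ×ˢ Icc (-1) 1) :
    |p.2| ≤ |(suspensionMap g p).2| := by
  rw [abs_snd_suspensionMap hg hp]
  have hy := mem_closedBall_zero_iff.1 (mapsTo_alexanderIsotopy hg (one_sub_abs_mem_Icc hp.2) hp.1)
  have ht := abs_le.2 hp.2
  nlinarith [mul_nonneg (mul_nonneg (sub_nonneg.2 hy) (abs_nonneg p.2)) (sub_nonneg.2 ht)]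

theorem abs_snd_lt_abs_snd_suspensionMap (hg : MapsTo g (closedBall 0 1) (closedBall 0 1))
    {p : E × ℝ} (hp : p ∈ ball 0 1 ×ˢ Ioo (-1) 1) (hp₀ : p.2 ≠ 0) :
    |p.2| < |(suspensionMap g p).2| := by
  have hx := mem_ball_zero_iff.1 hp.1
  have ht : |p.2| < 1 := abs_lt.2 hp.2
  have hy : ‖alexanderIsotopy g (1 - |p.2|) p.1‖ < 1 :=
    (norm_alexanderIsotopy_le hg (sub_nonneg.2 ht.le) p.1).trans_lt
      (max_lt (sub_lt_self _ (abs_pos.2 hp₀)) hx)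
  rw [abs_snd_suspensionMap hg (prod_mono Metric.ball_subset_closedBall Ioo_subset_Icc_self hp)]
  have := mul_pos (mul_pos (sub_pos.2 hy) (abs_pos.2 hp₀)) (sub_pos.2 ht)
  linarith

theorem nonwanderingOn_suspensionMap_subset (hgc : ContinuousOn g (closedBall 0 1))
    (hg : BijOn g (closedBall 0 1) (closedBall 0 1))
    (hgbd : EqOn g id (frontier (closedBall 0 1))) :
    nonwanderingOn (suspensionMap g) (closedBall 0 1 ×ˢ Icc (-1) 1) ⊆
      closedBall 0 1 ×ˢ {0} ∪ frontier (closedBall (0 : E) 1 ×ˢ Icc (-1) 1) := by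
  intro p hp
  by_contra hcon
  simp only [mem_union, mem_prod, mem_singleton_iff, not_or, not_and] at hcon
  have hpK := hp.1
  have hint : p ∈ ball 0 1 ×ˢ Ioo (-1) 1 := by
    rw [← interior_Icc, ← interior_closedBall _ one_ne_zero, ← interior_prod_eq,
      ← self_sdiff_frontier]
    exact ⟨hpK, hcon.2⟩
  exact notMem_nonwanderingOn_of_lyapunov (bijOn_suspensionMap hg).mapsTo
    (continuousOn_suspensionMap hgc hg.mapsTo hgbd) (continuous_abs.comp continuous_snd)
    (fun q hq => abs_snd_le_abs_snd_suspensionMap hg.mapsTo hq)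
    (abs_snd_lt_abs_snd_suspensionMap hg.mapsTo hint (hcon.1 hpK.1)) hp

end Suspension

theorem cube_eq_closedBall (d : ℕ) : cube d = closedBall 0 1 := by
  ext x
  simp [cube, pi_norm_le_iff_of_nonneg, Real.norm_eq_abs, abs_le]

theorem suspension_homeomorphism_general (d : ℕ)
    (g : (Fin d → ℝ) → (Fin d → ℝ))
    (hgc : ContinuousOn g (cube d)) (hgbij : Set.BijOn g (cube d) (cube d))
    (hgbd : Set.EqOn g id (frontier (cube d))) :
    ∃ f : (Fin d → ℝ) × ℝ → (Fin d → ℝ) × ℝ,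
      ContinuousOn f (cubeSucc d) ∧ Set.BijOn f (cubeSucc d) (cubeSucc d) ∧
      (∃ f' : (Fin d → ℝ) × ℝ → (Fin d → ℝ) × ℝ, ContinuousOn f' (cubeSucc d) ∧
        Set.InvOn f' f (cubeSucc d) (cubeSucc d)) ∧
      Set.EqOn f id (frontier (cubeSucc d)) ∧
      (∀ x ∈ cube d, f (x, 0) = (g x, 0)) ∧
      nonwanderingOn f (cubeSucc d) ⊆ (cube d ×ˢ ({0} : Set ℝ)) ∪ frontier (cubeSucc d) := by
  rw [cubeSucc, cube_eq_closedBall] at *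
  have hf := continuousOn_suspensionMap hgc hgbij.mapsTo hgbd
  have hbij := bijOn_suspensionMap hgbij
  have hK : IsCompact (closedBall (0 : Fin d → ℝ) 1 ×ˢ Icc (-1 : ℝ) 1) :=
    (ProperSpace.isCompact_closedBall _ _).prod isCompact_Icc
  exact ⟨suspensionMap g, hf, hbij,
    ⟨_, hK.continuousOn_invFunOn hf hbij, hbij.invOn_invFunOn⟩,
    suspensionMap_eq_self_of_mem_frontier hgbd, fun _ hx => suspensionMap_zero hx,
    nonwanderingOn_suspensionMap_subset hgc hgbij hgbd⟩

/-- **Suspension of a boundary-fixing homeomorphism of the cube** (from the proof of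
Corollary `higherDimCor`): if `g` is a homeomorphism of `[-1,1]^d` (`d ≥ 1`) restricting
to the identity on `∂[-1,1]^d`, then there is a homeomorphism `f` of
`[-1,1]^{d+1} = [-1,1]^d × [-1,1]` restricting to the identity on `∂[-1,1]^{d+1}`, with
`f(x,0) = (g(x),0)` for all `x ∈ [-1,1]^d`, and whose nonwandering set is contained in
`([-1,1]^d × {0}) ∪ ∂[-1,1]^{d+1}`. -/
theorem suspension_homeomorphism (d : ℕ) (hd : 1 ≤ d)
    (g : (Fin d → ℝ) → (Fin d → ℝ))
    (hgc : ContinuousOn g (cube d)) (hgbij : Set.BijOn g (cube d) (cube d))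
    (hgic : ∃ g' : (Fin d → ℝ) → (Fin d → ℝ), ContinuousOn g' (cube d) ∧
      Set.InvOn g' g (cube d) (cube d))
    (hgbd : Set.EqOn g id (frontier (cube d))) :
    ∃ f : (Fin d → ℝ) × ℝ → (Fin d → ℝ) × ℝ,
      ContinuousOn f (cubeSucc d) ∧ Set.BijOn f (cubeSucc d) (cubeSucc d) ∧
      (∃ f' : (Fin d → ℝ) × ℝ → (Fin d → ℝ) × ℝ, ContinuousOn f' (cubeSucc d) ∧
        Set.InvOn f' f (cubeSucc d) (cubeSucc d)) ∧
      Set.EqOn f id (frontier (cubeSucc d)) ∧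
      (∀ x ∈ cube d, f (x, 0) = (g x, 0)) ∧
      nonwanderingOn f (cubeSucc d) ⊆ (cube d ×ˢ ({0} : Set ℝ)) ∪ frontier (cubeSucc d) :=
  suspension_homeomorphism_general d g hgc hgbij hgbd
end
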